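/- Let n ≥ 3 and let W° = {±1}°^n ⋊ S_n be the group acting on ℝ^n by coordinate permutations combined with an even number of sign changes (the Weyl group of the root system D_n). Let b = e₁ = (1, 0, …, 0) and let W°_b be its stabilizer in W°. Then every W°_b-invariant polynomial function on ℝ^n lies in the ℝ-subalgebra generated by the W°-invariant polynomial functions f together with their translates v ↦ f(v + b). -/

import Mathlib

open scoped RealInnerProductSpace

/-- The signed permutation `(ε, σ)` acting on `ℝ^n`: `x ↦ (ε i * x (σ i))_i`. -/
noncomputable def sgnPerm {n : ℕ} (ε : Fin n → ℝ) (σ : Equiv.Perm (Fin n))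
    (x : EuclideanSpace ℝ (Fin n)) : EuclideanSpace ℝ (Fin n) :=
  WithLp.toLp 2 (fun i => ε i * x (σ i))

/-- A polynomial function on a real vector space `M`: an element of the `ℝ`-subalgebra of
`M → ℝ` generated by the linear functionals. -/
def IsPolyFun {M : Type*} [AddCommGroup M] [Module ℝ M] (f : M → ℝ) : Prop :=
  f ∈ Algebra.adjoin ℝ {g : M → ℝ | ∃ l : M →ₗ[ℝ] ℝ, g = ⇑l}

/-- Invariance of `f : ℝ^n → ℝ` under the group `W = {±1}^n ⋊ S_n` of all signed
permutations of the coordinates. -/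
def IsWInv {n : ℕ} (f : EuclideanSpace ℝ (Fin n) → ℝ) : Prop :=
  ∀ (ε : Fin n → ℝ), (∀ i, ε i = 1 ∨ ε i = -1) → ∀ σ : Equiv.Perm (Fin n),
    ∀ x, f (sgnPerm ε σ x) = f x

/-- Invariance of `f : ℝ^n → ℝ` under the group `W° = {±1}°^n ⋊ S_n` of signed
permutations with an even number of sign changes (`∏ ε i = 1`). -/
def IsW0Inv {n : ℕ} (f : EuclideanSpace ℝ (Fin n) → ℝ) : Prop :=
  ∀ (ε : Fin n → ℝ), (∀ i, ε i = 1 ∨ ε i = -1) → (∏ i, ε i = 1) →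
    ∀ σ : Equiv.Perm (Fin n), ∀ x, f (sgnPerm ε σ x) = f x

/-!
The stabilizer of `b = e₀` in `W°` consists of the even signed permutations `(ε, σ)` with
`ε 0 = 1` and `σ 0 = 0`: it is the group `W°` of type `D_{n-1}` acting on the other coordinates.
So a `W°_b`-invariant polynomial is a polynomial in `x₀` whose coefficients are
`D_{n-1}`-invariants. These are generated by the even power sums and the product of the
variables: a `D`-invariant is the sum of a `B`-invariant and a `B`-anti-invariant, the latter is
`∏ xᵢ` times a `B`-invariant, and `B`-invariants are symmetric polynomials in the `xᵢ²`.
With `p_k = ∑ xᵢ^k`, all these generators come from `W°`-invariants and their translates by `b`: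
`2 x₀ + 1 = p₂(x + b) - p₂(x)`, `∏_{i ≠ 0} xᵢ = ∏ (x + b)ᵢ - ∏ xᵢ` and
`∑_{i ≠ 0} xᵢ^{2k} = p_{2k}(x) - x₀^{2k}`.
-/

section SignVector

variable {τ R : Type*} [CommRing R]

def IsSignVector (ε : τ → R) : Prop :=
  ∀ i, ε i = 1 ∨ ε i = -1

namespace IsSignVector

theorem mul_self {ε : τ → R} (hε : IsSignVector ε) (i : τ) : ε i * ε i = 1 := by
  rcases hε i with h | h <;> simp [h]

theorem mul {ε δ : τ → R} (hε : IsSignVector ε) (hδ : IsSignVector δ) :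
    IsSignVector (ε * δ) := fun i => by
  rcases hε i with h | h <;> rcases hδ i with h' | h' <;> simp [h, h']

theorem comp {υ : Type*} {ε : τ → R} (hε : IsSignVector ε) (f : υ → τ) :
    IsSignVector (ε ∘ f) :=
  fun i => hε (f i)

theorem prod_eq_one_or [Fintype τ] {ε : τ → R} (hε : IsSignVector ε) :
    ∏ i, ε i = 1 ∨ ∏ i, ε i = -1 :=
  Finset.prod_induction ε (fun a => a = 1 ∨ a = -1)
    (fun _ _ ha hb => by rcases ha with rfl | rfl <;> rcases hb with rfl | rfl <;> simp)
    (Or.inl rfl) fun i _ => hε i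

end IsSignVector

theorem isSignVector_one : IsSignVector (1 : τ → R) := fun _ => Or.inl rfl

theorem isSignVector_mulSingle_neg_one [DecidableEq τ] (i : τ) :
    IsSignVector (Pi.mulSingle i (-1 : R)) := fun j => by
  by_cases h : j = i <;> simp [h]

end SignVector

namespace MvPolynomial

section SignedPerm

variable {τ R : Type*} [CommSemiring R]

noncomputable def signedPerm (ε : τ → R) (σ : Equiv.Perm τ) :
    MvPolynomial τ R →ₐ[R] MvPolynomial τ R :=
  aeval fun i => C (ε i) * X (σ i)

@[simp]
theorem signedPerm_X (ε : τ → R) (σ : Equiv.Perm τ) (i : τ) :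
    signedPerm ε σ (X i) = C (ε i) * X (σ i) :=
  aeval_X _ _

theorem signedPerm_comp_signedPerm (ε δ : τ → R) (σ ρ : Equiv.Perm τ) :
    (signedPerm ε σ).comp (signedPerm δ ρ) = signedPerm (fun i => δ i * ε (ρ i)) (σ * ρ) := by
  ext i : 1
  simp only [AlgHom.comp_apply, signedPerm_X, map_mul, algHom_C, algebraMap_eq,
    Equiv.Perm.mul_apply]
  ring

theorem signedPerm_signedPerm (ε δ : τ → R) (σ ρ : Equiv.Perm τ) (q : MvPolynomial τ R) :
    signedPerm ε σ (signedPerm δ ρ q) = signedPerm (fun i => δ i * ε (ρ i)) (σ * ρ) q :=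
  DFunLike.congr_fun (signedPerm_comp_signedPerm ε δ σ ρ) q

theorem signedPerm_one_left (σ : Equiv.Perm τ) : signedPerm (1 : τ → R) σ = rename σ := by
  ext i : 1
  simp

variable [Fintype τ]

theorem signedPerm_one_right_monomial (ε : τ → R) (d : τ →₀ ℕ) (r : R) :
    signedPerm ε 1 (monomial d r) = monomial d ((∏ i, ε i ^ d i) * r) := by
  rw [signedPerm, aeval_monomial, monomial_eq, Finsupp.prod_fintype _ _ fun _ => pow_zero _,
    Finsupp.prod_fintype _ _ fun _ => pow_zero _]
  simp only [Equiv.Perm.one_apply, mul_pow, Finset.prod_mul_distrib, algebraMap_eq, C_mul,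
    map_prod, map_pow]
  ring

theorem coeff_signedPerm_one_right (ε : τ → R) (q : MvPolynomial τ R) (d : τ →₀ ℕ) :
    coeff d (signedPerm ε 1 q) = (∏ i, ε i ^ d i) * coeff d q := by
  classical
  induction q using induction_on' with
  | monomial e r =>
    rw [signedPerm_one_right_monomial, coeff_monomial, coeff_monomial]
    split_ifs with h
    · rw [h]
    · rw [mul_zero]
  | add p q hp hq => rw [map_add, coeff_add, coeff_add, hp, hq, mul_add]

theorem signedPerm_prod_X (ε : τ → R) (σ : Equiv.Perm τ) :
    signedPerm ε σ (∏ i, X i) = C (∏ i, ε i) * ∏ i, X i := by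
  simp only [map_prod, signedPerm_X, Finset.prod_mul_distrib]
  rw [Equiv.prod_comp σ X]

theorem prod_X_dvd_of_pos {q : MvPolynomial τ R} (hq : ∀ d ∈ q.support, ∀ i, 0 < d i) :
    (∏ i, X i : MvPolynomial τ R) ∣ q := by
  classical
  have hprod : (∏ i, X i : MvPolynomial τ R) = monomial (Finsupp.equivFunOnFinite.symm 1) 1 := by
    simp [monomial_eq, Finsupp.prod_fintype]
  rw [hprod, monomial_one_dvd_iff_modMonomial_eq_zero]
  ext d
  by_cases hle : Finsupp.equivFunOnFinite.symm 1 ≤ d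
  · rw [coeff_modMonomial_of_le _ hle, coeff_zero]
  · rw [coeff_modMonomial_of_not_le _ hle, coeff_zero, ← notMem_support_iff]
    exact fun hd => hle fun i => hq d hd i

end SignedPerm

section Invariants

variable {τ R : Type*} [Fintype τ] [CommRing R]

def IsSignedPermInvariant (q : MvPolynomial τ R) : Prop :=
  ∀ ε : τ → R, IsSignVector ε → ∀ σ, signedPerm ε σ q = q

def IsEvenSignedPermInvariant (q : MvPolynomial τ R) : Prop :=
  ∀ ε : τ → R, IsSignVector ε → ∏ i, ε i = 1 → ∀ σ, signedPerm ε σ q = q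

theorem IsSignedPermInvariant.isEvenSignedPermInvariant {q : MvPolynomial τ R}
    (hq : IsSignedPermInvariant q) : IsEvenSignedPermInvariant q :=
  fun ε hε _ σ => hq ε hε σ

theorem isSignedPermInvariant_psum_two_mul (k : ℕ) :
    IsSignedPermInvariant (psum τ R (2 * k)) := by
  intro ε hε σ
  have hsq (i : τ) : ε i ^ 2 = 1 := by rw [sq, hε.mul_self]
  simp only [psum, map_sum, map_pow, signedPerm_X, pow_mul, mul_pow, ← C_pow, hsq, C_1,
    one_mul]
  exact Equiv.sum_comp σ fun i => (X i ^ 2) ^ k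

theorem isEvenSignedPermInvariant_prod_X :
    IsEvenSignedPermInvariant (∏ i, X i : MvPolynomial τ R) := by
  intro ε _ hprod σ
  rw [signedPerm_prod_X, hprod, C_1, one_mul]

theorem IsEvenSignedPermInvariant.signedPerm_eq {q : MvPolynomial τ R}
    (hq : IsEvenSignedPermInvariant q) {ε δ : τ → R} (hε : IsSignVector ε)
    (hδ : IsSignVector δ) (hprod : ∏ i, ε i = ∏ i, δ i) (σ ρ : Equiv.Perm τ) :
    signedPerm ε σ q = signedPerm δ ρ q := by
  set π := σ⁻¹ * ρ
  have hη : ∏ i, δ i * ε (π i) = 1 := by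
    rw [Finset.prod_mul_distrib, Equiv.prod_comp π ε, ← hprod, ← Finset.prod_mul_distrib,
      Finset.prod_eq_one fun i _ => hε.mul_self i]
  calc signedPerm ε σ q = signedPerm ε σ (signedPerm (fun i => δ i * ε (π i)) π q) := by
        rw [hq (fun i => δ i * ε (π i)) (hδ.mul (hε.comp π)) hη π]
    _ = signedPerm δ ρ q := by
        rw [signedPerm_signedPerm, mul_inv_cancel_left]
        congr 2 with i
        rw [mul_assoc, hε.mul_self, mul_one]

theorem IsEvenSignedPermInvariant.signedPerm_add_and_sub {q : MvPolynomial τ R}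
    (hq : IsEvenSignedPermInvariant q) {t : τ → R} (ht : IsSignVector t) (ht' : ∏ i, t i = -1)
    {ε : τ → R} (hε : IsSignVector ε) (σ : Equiv.Perm τ) :
    signedPerm ε σ (q + signedPerm t 1 q) = q + signedPerm t 1 q ∧
      signedPerm ε σ (q - signedPerm t 1 q) = C (∏ i, ε i) * (q - signedPerm t 1 q) := by
  have hcomp : signedPerm ε σ (signedPerm t 1 q) = signedPerm (t * ε) σ q := by
    rw [signedPerm_signedPerm, mul_one]
    rfl
  have hprod : ∏ i, (t * ε) i = -∏ i, ε i := by
    rw [Pi.mul_def, Finset.prod_mul_distrib, ht', neg_one_mul]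
  rw [map_add, map_sub, hcomp]
  rcases hε.prod_eq_one_or with h | h
  · rw [hq ε hε h σ, hq.signedPerm_eq (ht.mul hε) ht (by rw [hprod, h, ht']) σ 1, h, C_1,
      one_mul]
    exact ⟨rfl, rfl⟩
  · rw [hq.signedPerm_eq hε ht (h.trans ht'.symm) σ 1,
      hq _ (ht.mul hε) (by rw [hprod, h, neg_neg]) σ, h, map_neg, C_1]
    exact ⟨add_comm _ _, by ring⟩

end Invariants

section Parity

variable {τ R : Type*} [Fintype τ] [CommRing R] [IsDomain R]

theorem neg_one_pow_eq_of_signedPerm_mulSingle [DecidableEq τ] {q : MvPolynomial τ R} {i : τ}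
    {s : R} (hq : signedPerm (Pi.mulSingle i (-1)) 1 q = C s * q) {d : τ →₀ ℕ}
    (hd : d ∈ q.support) : (-1) ^ d i = s := by
  have hcoeff := congrArg (coeff d) hq
  rw [coeff_signedPerm_one_right, coeff_C_mul,
    Finset.prod_eq_single i (fun j _ hj => by simp [hj]) (by simp), Pi.mulSingle_eq_same]
    at hcoeff
  exact mul_right_cancel₀ (mem_support_iff.1 hd) hcoeff

variable [CharZero R]

theorem IsSignedPermInvariant.even_of_mem_support {q : MvPolynomial τ R}
    (hq : IsSignedPermInvariant q) {d : τ →₀ ℕ} (hd : d ∈ q.support) (i : τ) : Even (d i) := by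
  classical
  refine (neg_one_pow_eq_one_iff_even (by norm_num)).1
    (neg_one_pow_eq_of_signedPerm_mulSingle ?_ hd)
  rw [hq _ (isSignVector_mulSingle_neg_one i), C_1, one_mul]

theorem odd_of_mem_support_of_signedPerm_eq {q : MvPolynomial τ R}
    (hq : ∀ ε, IsSignVector ε → ∀ σ, signedPerm ε σ q = C (∏ i, ε i) * q) {d : τ →₀ ℕ}
    (hd : d ∈ q.support) (i : τ) : Odd (d i) := by
  classical
  refine (neg_one_pow_eq_neg_one_iff_odd (by norm_num)).1
    (neg_one_pow_eq_of_signedPerm_mulSingle ?_ hd)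
  rw [hq _ (isSignVector_mulSingle_neg_one i), Fintype.prod_pi_mulSingle']

theorem exists_isSignedPermInvariant_eq_prod_X_mul {q : MvPolynomial τ R}
    (hq : ∀ ε, IsSignVector ε → ∀ σ, signedPerm ε σ q = C (∏ i, ε i) * q) :
    ∃ q', IsSignedPermInvariant q' ∧ q = (∏ i, X i) * q' := by
  obtain ⟨q', rfl⟩ := prod_X_dvd_of_pos fun d hd i =>
    (odd_of_mem_support_of_signedPerm_eq hq hd i).pos
  refine ⟨q', fun ε hε σ => ?_, rfl⟩
  have hεσ := hq ε hε σ
  rw [map_mul, signedPerm_prod_X, mul_assoc] at hεσ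
  have hC : (C (∏ i, ε i) : MvPolynomial τ R) ≠ 0 := by
    rcases hε.prod_eq_one_or with h | h <;> simp [h]
  have hX : (∏ i, X i : MvPolynomial τ R) ≠ 0 := Finset.prod_ne_zero_iff.2 fun i _ => X_ne_zero i
  exact mul_left_cancel₀ hX (mul_left_cancel₀ hC hεσ)

end Parity

section Expand

variable {τ R : Type*} [CommSemiring R]

theorem mem_range_expand_of_dvd {p : ℕ} {q : MvPolynomial τ R}
    (hq : ∀ d ∈ q.support, ∀ i, p ∣ d i) : q ∈ (expand p).range := by
  rw [q.as_sum]
  refine Subalgebra.sum_mem _ fun d hd =>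
    (AlgHom.mem_range _).2 ⟨monomial (d.mapRange (· / p) (Nat.zero_div p)) (coeff d q), ?_⟩
  rw [expand_monomial]
  congr 2
  ext i
  simp [Nat.mul_div_cancel' (hq d hd i)]

theorem IsSymmetric.of_expand {p : ℕ} (hp : 0 < p) {r : MvPolynomial τ R}
    (hr : (expand p r).IsSymmetric) : r.IsSymmetric :=
  fun σ => expand_injective hp (by rw [← rename_expand, hr σ])

theorem expand_psum [Fintype τ] (p k : ℕ) : expand p (psum τ R k) = psum τ R (p * k) := by
  simp only [psum, map_sum, map_pow, expand_X, pow_mul]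

end Expand

section Generators

variable {τ K : Type*} [Fintype τ] [Field K] [CharZero K]

theorem esymm_mem_adjoin_psum (k : ℕ) :
    esymm τ K k ∈ Algebra.adjoin K (Set.range (psum τ K)) := by
  induction k using Nat.strong_induction_on with
  | _ k ih =>
    obtain rfl | hk := k.eq_zero_or_pos
    · rw [esymm_zero]
      exact Subalgebra.one_mem _
    have hsign (j : ℕ) :
        ((-1) ^ j : MvPolynomial τ K) ∈ Algebra.adjoin K (Set.range (psum τ K)) :=
      Subalgebra.pow_mem _ (Subalgebra.neg_mem _ (Subalgebra.one_mem _)) j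
    have hk' : esymm τ K k = C (k : K)⁻¹ * ((k : MvPolynomial τ K) * esymm τ K k) := by
      rw [← mul_assoc, ← map_natCast C, ← C_mul, inv_mul_cancel₀ (by exact_mod_cast hk.ne'),
        C_1, one_mul]
    -- Newton's identities
    rw [hk', mul_esymm_eq_sum]
    refine Subalgebra.mul_mem _ (Subalgebra.algebraMap_mem _ _)
      (Subalgebra.mul_mem _ (hsign _) (Subalgebra.sum_mem _ fun a ha => ?_))
    exact Subalgebra.mul_mem _
      (Subalgebra.mul_mem _ (hsign _) (ih a.1 (Finset.mem_filter.1 ha).2))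
      (Algebra.subset_adjoin ⟨a.2, rfl⟩)

theorem IsSymmetric.mem_adjoin_psum {q : MvPolynomial τ K} (hq : q.IsSymmetric) :
    q ∈ Algebra.adjoin K (Set.range (psum τ K)) := by
  obtain ⟨r, hr⟩ := esymmAlgHom_surjective K (n := Fintype.card τ) le_rfl ⟨q, hq⟩
  have hq' : q ∈ Algebra.adjoin K
      (Set.range fun i : Fin (Fintype.card τ) => esymm τ K (i + 1)) := by
    rw [Algebra.adjoin_range_eq_range_aeval]
    exact (AlgHom.mem_range _).2 ⟨r, by rw [← esymmAlgHom_apply, hr]⟩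
  exact Algebra.adjoin_le (by rintro _ ⟨i, rfl⟩; exact esymm_mem_adjoin_psum _) hq'

theorem IsSignedPermInvariant.mem_adjoin_psum {q : MvPolynomial τ K}
    (hq : IsSignedPermInvariant q) :
    q ∈ Algebra.adjoin K (Set.range fun k => psum τ K (2 * k)) := by
  obtain ⟨r, rfl⟩ := mem_range_expand_of_dvd fun d hd i => (hq.even_of_mem_support hd i).two_dvd
  have hsymm : (expand 2 r).IsSymmetric := fun σ => by
    rw [← signedPerm_one_left]
    exact hq 1 isSignVector_one σ
  refine Algebra.adjoin_le (S := (Algebra.adjoin K _).comap (expand 2)) ?_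
    (hsymm.of_expand two_pos).mem_adjoin_psum
  rintro _ ⟨k, rfl⟩
  exact Algebra.subset_adjoin ⟨k, (expand_psum 2 k).symm⟩

theorem IsEvenSignedPermInvariant.mem_adjoin {q : MvPolynomial τ K}
    (hq : IsEvenSignedPermInvariant q) :
    q ∈ Algebra.adjoin K (insert (∏ i, X i) (Set.range fun k => psum τ K (2 * k))) := by
  classical
  cases isEmpty_or_nonempty τ
  · refine Algebra.adjoin_mono (Set.subset_insert _ _) (IsSignedPermInvariant.mem_adjoin_psum ?_)
    exact fun ε hε => hq ε hε (by simp)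
  obtain ⟨i⟩ := ‹Nonempty τ›
  set t : τ → K := Pi.mulSingle i (-1)
  have ht : IsSignVector t := isSignVector_mulSingle_neg_one i
  have ht' : ∏ j, t j = -1 := Fintype.prod_pi_mulSingle' i (-1)
  obtain ⟨q', hq', hfac⟩ := exists_isSignedPermInvariant_eq_prod_X_mul fun ε hε σ =>
    (hq.signedPerm_add_and_sub ht ht' hε σ).2
  have hsplit : q = (2 : K)⁻¹ • ((q + signedPerm t 1 q) + (q - signedPerm t 1 q)) := by
    rw [add_add_sub_cancel, ← two_smul K q, smul_smul, inv_mul_cancel₀ two_ne_zero, one_smul]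
  rw [hsplit, hfac]
  refine Subalgebra.smul_mem _ (Subalgebra.add_mem _ ?_ (Subalgebra.mul_mem _
    (Algebra.subset_adjoin (Set.mem_insert _ _)) ?_)) _
  · exact Algebra.adjoin_mono (Set.subset_insert _ _)
      (IsSignedPermInvariant.mem_adjoin_psum fun ε hε σ =>
        (hq.signedPerm_add_and_sub ht ht' hε σ).1)
  · exact Algebra.adjoin_mono (Set.subset_insert _ _) hq'.mem_adjoin_psum

end Generators

section Stabilizer

variable {R : Type*} [CommRing R] {m : ℕ}

def IsStabilizerInvariant (p : MvPolynomial (Fin (m + 1)) R) : Prop :=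
  ∀ ε, IsSignVector ε → ∏ i, ε i = 1 → ∀ σ : Equiv.Perm (Fin (m + 1)), ε 0 = 1 → σ 0 = 0 →
    signedPerm ε σ p = p

theorem finSuccEquiv_rename_succ (c : MvPolynomial (Fin m) R) :
    finSuccEquiv R m (rename Fin.succ c) = Polynomial.C c := by
  have : (finSuccEquiv R m).toAlgHom.comp (rename Fin.succ) = Polynomial.CAlgHom := by
    ext i : 1
    simp [finSuccEquiv_X_succ]
  exact DFunLike.congr_fun this c

theorem finSuccEquiv_signedPerm_cons (ε : Fin m → R) (σ : Equiv.Perm (Fin m))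
    (p : MvPolynomial (Fin (m + 1)) R) :
    finSuccEquiv R m (signedPerm (Fin.cons 1 ε) (Equiv.Perm.decomposeFin.symm (0, σ)) p) =
      (finSuccEquiv R m p).map (signedPerm ε σ) := by
  have : (finSuccEquiv R m).toAlgHom.comp
      (signedPerm (Fin.cons 1 ε) (Equiv.Perm.decomposeFin.symm (0, σ))) =
      (Polynomial.mapAlgHom (signedPerm ε σ)).comp (finSuccEquiv R m).toAlgHom := by
    ext i : 1
    cases i using Fin.cases with
    | zero => simp [finSuccEquiv_X_zero]
    | succ j => simp [finSuccEquiv_apply]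
  exact DFunLike.congr_fun this p

theorem IsStabilizerInvariant.isEvenSignedPermInvariant_coeff_finSuccEquiv
    {p : MvPolynomial (Fin (m + 1)) R} (hp : IsStabilizerInvariant p) (k : ℕ) :
    IsEvenSignedPermInvariant ((finSuccEquiv R m p).coeff k) := by
  intro ε hε hprod σ
  have hcons : IsSignVector (Fin.cons 1 ε : Fin (m + 1) → R) := fun i => by
    cases i using Fin.cases with
    | zero => simp
    | succ j => simpa using hε j
  rw [← AlgHom.coe_toRingHom, ← Polynomial.coeff_map, ← finSuccEquiv_signedPerm_cons,
    hp _ hcons (by rw [Fin.prod_cons, hprod, one_mul]) _ rfl (by simp)]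

theorem IsStabilizerInvariant.mem_adjoin_X_zero_rename_succ {p : MvPolynomial (Fin (m + 1)) R}
    (hp : IsStabilizerInvariant p) :
    p ∈ Algebra.adjoin R
      (insert (X 0) (rename Fin.succ '' {q | IsEvenSignedPermInvariant q})) := by
  rw [← (finSuccEquiv R m).symm_apply_apply p, (finSuccEquiv R m p).as_sum_support_C_mul_X_pow,
    map_sum]
  refine Subalgebra.sum_mem _ fun k _ => ?_
  rw [map_mul, map_pow, (AlgEquiv.symm_apply_eq _).2 (finSuccEquiv_rename_succ _).symm,
    (AlgEquiv.symm_apply_eq _).2 finSuccEquiv_X_zero.symm]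
  exact Subalgebra.mul_mem _ (Algebra.subset_adjoin (Set.mem_insert_of_mem _
    ⟨_, hp.isEvenSignedPermInvariant_coeff_finSuccEquiv k, rfl⟩))
    (Subalgebra.pow_mem _ (Algebra.subset_adjoin (Set.mem_insert _ _)) k)

end Stabilizer

section Translate

variable {τ R : Type*} [CommSemiring R]

noncomputable def translate (c : τ → R) : MvPolynomial τ R →ₐ[R] MvPolynomial τ R :=
  aeval fun i => X i + C (c i)

@[simp]
theorem translate_X (c : τ → R) (i : τ) : translate c (X i) = X i + C (c i) :=
  aeval_X _ _

variable {m : ℕ}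

theorem translate_rename_succ (c : MvPolynomial (Fin m) R) :
    translate (Pi.single 0 1) (rename Fin.succ c) = rename Fin.succ c := by
  have : (translate (Pi.single 0 1)).comp (rename Fin.succ) =
      rename (R := R) (Fin.succ (n := m)) := by
    ext i : 1
    simp
  exact DFunLike.congr_fun this c

theorem psum_fin_succ (k : ℕ) :
    psum (Fin (m + 1)) R k = X 0 ^ k + rename Fin.succ (psum (Fin m) R k) := by
  simp [psum, Fin.sum_univ_succ]

theorem prod_X_fin_succ :
    (∏ i, X i : MvPolynomial (Fin (m + 1)) R) = X 0 * rename Fin.succ (∏ i, X i) := by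
  simp [Fin.prod_univ_succ]

theorem translate_psum_two :
    translate (Pi.single 0 1) (psum (Fin (m + 1)) R 2) =
      psum (Fin (m + 1)) R 2 + 2 * X 0 + 1 := by
  rw [psum_fin_succ, map_add, map_pow, translate_X, translate_rename_succ]
  simp only [Pi.single_eq_same, C_1]
  ring

theorem translate_prod_X :
    translate (Pi.single 0 1) (∏ i, X i : MvPolynomial (Fin (m + 1)) R) =
      ∏ i, X i + rename Fin.succ (∏ i, X i) := by
  rw [prod_X_fin_succ, map_mul, translate_X, translate_rename_succ]
  simp only [Pi.single_eq_same, C_1]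
  ring

end Translate

theorem IsStabilizerInvariant.mem_adjoin_translate {K : Type*} [Field K] [CharZero K] {m : ℕ}
    {p : MvPolynomial (Fin (m + 1)) K} (hp : IsStabilizerInvariant p) :
    p ∈ Algebra.adjoin K ({q | IsEvenSignedPermInvariant q} ∪
      translate (Pi.single 0 1) '' {q | IsEvenSignedPermInvariant q}) := by
  set A := Algebra.adjoin K ({q : MvPolynomial (Fin (m + 1)) K | IsEvenSignedPermInvariant q} ∪
      translate (Pi.single 0 1) '' {q | IsEvenSignedPermInvariant q})
  have hinv {q} (hq : IsEvenSignedPermInvariant q) : q ∈ A := Algebra.subset_adjoin (Or.inl hq)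
  have htr {q} (hq : IsEvenSignedPermInvariant q) : translate (Pi.single 0 1) q ∈ A :=
    Algebra.subset_adjoin (Or.inr ⟨q, hq, rfl⟩)
  have hpsum (k : ℕ) : psum (Fin (m + 1)) K (2 * k) ∈ A :=
    hinv (isSignedPermInvariant_psum_two_mul k).isEvenSignedPermInvariant
  have hX : X 0 ∈ A := by
    have h2 : (2 : K) • (X 0 : MvPolynomial (Fin (m + 1)) K) =
        translate (Pi.single 0 1) (psum _ K 2) - psum _ K 2 - 1 := by
      rw [translate_psum_two, two_smul]
      ring
    rw [← inv_smul_smul₀ (two_ne_zero : (2 : K) ≠ 0) (X 0 : MvPolynomial (Fin (m + 1)) K), h2]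
    exact Subalgebra.smul_mem _ (Subalgebra.sub_mem _ (Subalgebra.sub_mem _
      (htr (isSignedPermInvariant_psum_two_mul 1).isEvenSignedPermInvariant) (hpsum 1))
      (Subalgebra.one_mem _)) _
  refine Algebra.adjoin_le ?_ hp.mem_adjoin_X_zero_rename_succ
  rintro _ (rfl | ⟨q, hq, rfl⟩)
  · exact hX
  refine Algebra.adjoin_le (S := A.comap (rename Fin.succ)) ?_ hq.mem_adjoin
  rintro _ (rfl | ⟨k, rfl⟩)
  · change rename Fin.succ (∏ i, X i) ∈ A
    rw [← add_sub_cancel_left (∏ i, X i) (rename Fin.succ _), ← translate_prod_X]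
    exact Subalgebra.sub_mem _ (htr isEvenSignedPermInvariant_prod_X)
      (hinv isEvenSignedPermInvariant_prod_X)
  · change rename Fin.succ (psum (Fin m) K (2 * k)) ∈ A
    rw [← add_sub_cancel_left (X 0 ^ (2 * k)) (rename Fin.succ _), ← psum_fin_succ]
    exact Subalgebra.sub_mem _ (hpsum k) (Subalgebra.pow_mem _ hX _)

end MvPolynomial

section PolynomialFunctions

open MvPolynomial

variable {n : ℕ}

noncomputable def polyEval : MvPolynomial (Fin n) ℝ →ₐ[ℝ] (EuclideanSpace ℝ (Fin n) → ℝ) :=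
  aeval fun i x => x i

theorem polyEval_apply (p : MvPolynomial (Fin n) ℝ) (x : EuclideanSpace ℝ (Fin n)) :
    polyEval p x = eval (fun i => x i) p :=
  comp_aeval_apply _ (Pi.evalAlgHom ℝ (fun _ => ℝ) x) p

theorem polyEval_injective : Function.Injective (polyEval (n := n)) := fun p q h =>
  MvPolynomial.funext fun x => by
    simpa only [polyEval_apply] using congrFun h (WithLp.toLp 2 x)

theorem polyEval_aeval (g : Fin n → MvPolynomial (Fin n) ℝ) (p : MvPolynomial (Fin n) ℝ)
    (x : EuclideanSpace ℝ (Fin n)) :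
    polyEval (aeval g p) x = eval (fun i => polyEval (g i) x) p := by
  rw [polyEval_apply, ← aeval_eq_eval, comp_aeval_apply, aeval_eq_eval]
  simp only [polyEval_apply, aeval_eq_eval]

theorem polyEval_signedPerm (ε : Fin n → ℝ) (σ : Equiv.Perm (Fin n))
    (p : MvPolynomial (Fin n) ℝ) (x : EuclideanSpace ℝ (Fin n)) :
    polyEval (signedPerm ε σ p) x = polyEval p (sgnPerm ε σ x) := by
  rw [signedPerm, polyEval_aeval, polyEval_apply]
  simp [polyEval_apply, sgnPerm]

theorem polyEval_translate (c : Fin n → ℝ) (p : MvPolynomial (Fin n) ℝ) :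
    polyEval (translate c p) = fun x => polyEval p (x + WithLp.toLp 2 c) := by
  funext x
  rw [MvPolynomial.translate, polyEval_aeval, polyEval_apply]
  simp [polyEval_apply]

theorem isPolyFun_iff_exists_polyEval_eq {f : EuclideanSpace ℝ (Fin n) → ℝ} :
    IsPolyFun f ↔ ∃ p, polyEval p = f := by
  rw [← AlgHom.mem_range, IsPolyFun, polyEval, ← Algebra.adjoin_range_eq_range_aeval]
  suffices h : Algebra.adjoin ℝ {g : EuclideanSpace ℝ (Fin n) → ℝ | ∃ l : _ →ₗ[ℝ] ℝ, g = ⇑l} =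
      Algebra.adjoin ℝ (Set.range fun (i : Fin n) (x : EuclideanSpace ℝ (Fin n)) => x i) by
    rw [h]
  refine le_antisymm (Algebra.adjoin_le ?_) (Algebra.adjoin_mono ?_)
  · rintro _ ⟨l, rfl⟩
    have hl : ⇑l = ∑ i, l (EuclideanSpace.single i 1) •
        fun x : EuclideanSpace ℝ (Fin n) => x i := by
      funext x
      conv_lhs => rw [← (EuclideanSpace.basisFun (Fin n) ℝ).sum_repr x]
      simp [mul_comm]
    rw [hl]
    exact Subalgebra.sum_mem _ fun i _ =>
      Subalgebra.smul_mem _ (Algebra.subset_adjoin (Set.mem_range_self i)) _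
  · rintro _ ⟨i, rfl⟩
    exact ⟨(EuclideanSpace.proj i : EuclideanSpace ℝ (Fin n) →L[ℝ] ℝ).toLinearMap, rfl⟩

theorem MvPolynomial.IsEvenSignedPermInvariant.isW0Inv_polyEval {q : MvPolynomial (Fin n) ℝ}
    (hq : IsEvenSignedPermInvariant q) : IsW0Inv (polyEval q) := fun ε hε hprod σ x => by
  rw [← polyEval_signedPerm, hq ε hε hprod σ]

end PolynomialFunctions

theorem sgnPerm_single_zero {m : ℕ} {ε : Fin (m + 1) → ℝ} {σ : Equiv.Perm (Fin (m + 1))}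
    (hε : ε 0 = 1) (hσ : σ 0 = 0) :
    sgnPerm ε σ (EuclideanSpace.single 0 1) = EuclideanSpace.single 0 1 := by
  ext i
  obtain rfl | hi := eq_or_ne i 0
  · simp [sgnPerm, hε, hσ]
  · simp [sgnPerm, hi, hσ ▸ σ.injective.ne hi]

theorem Dn_stabilizer_of_b_invariants_generated
    (n : ℕ) (hn : 3 ≤ n)
    (b : EuclideanSpace ℝ (Fin n))
    (hb : ∀ i : Fin n, b i = if (i : ℕ) = 0 then (1 : ℝ) else 0)
    (f : EuclideanSpace ℝ (Fin n) → ℝ) (hf : IsPolyFun f)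
    -- `f` is invariant under the stabilizer `W°_b` of `b` in `W°`
    (hinv : ∀ (ε : Fin n → ℝ), (∀ i, ε i = 1 ∨ ε i = -1) → (∏ i, ε i = 1) →
      ∀ σ : Equiv.Perm (Fin n), sgnPerm ε σ b = b → ∀ x, f (sgnPerm ε σ x) = f x) :
    f ∈ Algebra.adjoin ℝ
      ({g : EuclideanSpace ℝ (Fin n) → ℝ | IsPolyFun g ∧ IsW0Inv g} ∪
       {g : EuclideanSpace ℝ (Fin n) → ℝ | ∃ h : EuclideanSpace ℝ (Fin n) → ℝ,
          (IsPolyFun h ∧ IsW0Inv h) ∧ g = fun v => h (v + b)}) := by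
  obtain ⟨m, rfl⟩ : ∃ m, n = m + 1 := ⟨n - 1, by omega⟩
  obtain rfl : b = EuclideanSpace.single 0 1 := by
    ext i
    rw [hb, PiLp.single_apply]
    simp only [Fin.val_eq_zero_iff]
  obtain ⟨p, rfl⟩ := isPolyFun_iff_exists_polyEval_eq.1 hf
  have hp : MvPolynomial.IsStabilizerInvariant p := fun ε hε hprod σ hε0 hσ0 =>
    polyEval_injective <| funext fun x => by
      rw [polyEval_signedPerm]
      exact hinv ε hε hprod σ (sgnPerm_single_zero hε0 hσ0) x
  refine Algebra.adjoin_le (S := (Algebra.adjoin ℝ _).comap polyEval) ?_ hp.mem_adjoin_translate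
  rintro _ (hq | ⟨q, hq, rfl⟩)
  · exact Algebra.subset_adjoin (Or.inl ⟨isPolyFun_iff_exists_polyEval_eq.2 ⟨_, rfl⟩,
      MvPolynomial.IsEvenSignedPermInvariant.isW0Inv_polyEval hq⟩)
  · exact Algebra.subset_adjoin (Or.inr ⟨polyEval q, ⟨isPolyFun_iff_exists_polyEval_eq.2 ⟨q, rfl⟩,
      MvPolynomial.IsEvenSignedPermInvariant.isW0Inv_polyEval hq⟩,
      polyEval_translate (Pi.single 0 1) q⟩)
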